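/- Let r be a real number with |r| < 1. Define W(r) = ∑_{n odd, n≥1} ζ(n+1) r^{n+1} and W̄(r) = ∑_{n odd, n≥3} ζ(n) r^n. Then W(r) + W̄(r) = r ( 1/(1 − r) + (r − 1) ∑_{n≥1} 1/(n(n + 1 − r)) ). -/

import Mathlib

/-- `W(r) = ∑_{n odd, n ≥ 1} ζ(n+1) r^(n+1)` (sum over odd `n = 2k+1`). -/
noncomputable def W (r : ℝ) : ℝ :=
  ∑' k : ℕ, (riemannZeta (2 * k + 2)).re * r ^ (2 * k + 2)

/-- `W̄(r) = ∑_{n odd, n ≥ 3} ζ(n) r^n` (sum over odd `n = 2k+3`). -/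
noncomputable def Wbar (r : ℝ) : ℝ :=
  ∑' k : ℕ, (riemannZeta (2 * k + 3)).re * r ^ (2 * k + 3)

/-!
Writing `ζ(m + 2) = ∑ₙ (n + 1)^-(m + 2)`, the sum `W(r) + W̄(r) = ∑_{m ≥ 0} ζ(m + 2) r^(m + 2)`
becomes an absolutely convergent double series. Summing the geometric series in `m` first gives
`∑ₙ (r / (n + 1 - r) - r / (n + 1))`. Since `r (r - 1) / ((n + 1) (n + 2 - r))` equals
`r / (n + 2 - r) - r / (n + 1)`, what remains after subtracting it is the telescoping series
`∑ₙ (r / (n + 1 - r) - r / (n + 2 - r)) = r / (1 - r)`.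
-/

open Filter Topology

lemma hasSum_sub_succ_of_tendsto {G : Type*} [AddCommGroup G] [TopologicalSpace G]
    [IsTopologicalAddGroup G] [T2Space G] {u : ℕ → G} {l : G} (hu : Tendsto u atTop (𝓝 l))
    (hs : Summable fun n => u n - u (n + 1)) : HasSum (fun n => u n - u (n + 1)) (u 0 - l) := by
  have hpartial : Tendsto (fun N => ∑ i ∈ Finset.range N, (u i - u (i + 1))) atTop
      (𝓝 (u 0 - l)) := by
    simpa only [Finset.sum_range_sub'] using hu.const_sub (u 0)
  rw [← tendsto_nhds_unique hs.hasSum.tendsto_sum_nat hpartial]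
  exact hs.hasSum

lemma hasSum_pow_add_two {K : Type*} [NormedDivisionRing K] {x : K} (hx : ‖x‖ < 1) :
    HasSum (fun m : ℕ => x ^ (m + 2)) ((1 - x)⁻¹ - 1 - x) := by
  have h := (hasSum_nat_add_iff' (f := (x ^ ·)) 2).mpr (hasSum_geometric_of_norm_lt_one hx)
  simpa only [Finset.sum_range_succ, Finset.sum_range_zero, pow_zero, pow_one, zero_add,
    sub_sub] using h

lemma hasSum_one_div_nat_add_one_pow_riemannZeta_re {k : ℕ} (hk : 1 < k) :
    HasSum (fun n : ℕ => 1 / ((n : ℝ) + 1) ^ k) (riemannZeta k).re := by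
  have hs : Summable (fun n : ℕ => 1 / ((n : ℝ) + 1) ^ k) := by
    simpa using (summable_nat_add_iff 1).mpr (Real.summable_one_div_nat_pow.mpr hk)
  convert hs.hasSum
  have hk' : 1 < (k : ℂ).re := by simpa using hk
  rw [zeta_eq_tsum_one_div_nat_add_one_cpow hk']
  have hterm (n : ℕ) : 1 / ((n : ℂ) + 1) ^ (k : ℂ) = ((1 / ((n : ℝ) + 1) ^ k : ℝ) : ℂ) := by
    push_cast [Complex.cpow_natCast]; rfl
  rw [tsum_congr hterm, ← Complex.ofReal_tsum, Complex.ofReal_re]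

lemma summable_div_nat_add_one_pow {r : ℝ} (hr : |r| < 1) :
    Summable (fun p : ℕ × ℕ => (r / ((p.2 : ℝ) + 1)) ^ (p.1 + 2)) := by
  have hinv : Summable (fun n : ℕ => 1 / ((n : ℝ) + 1) ^ 2) :=
    (hasSum_one_div_nat_add_one_pow_riemannZeta_re one_lt_two).summable
  refine Summable.of_norm_bounded
    ((summable_geometric_of_lt_one (abs_nonneg r) hr).mul_of_nonneg hinv
      (fun _ => by positivity) (fun _ => by positivity)) fun ⟨m, n⟩ => ?_
  have hn : 1 ≤ (n : ℝ) + 1 := by simp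
  have hpos : (0 : ℝ) < n + 1 := n.cast_add_one_pos
  calc ‖(r / ((n : ℝ) + 1)) ^ (m + 2)‖ = |r| ^ (m + 2) * (1 / ((n : ℝ) + 1)) ^ (m + 2) := by
        rw [norm_pow, Real.norm_eq_abs, abs_div, abs_of_pos hpos, div_pow,
          div_pow, one_pow, mul_one_div]
    _ ≤ |r| ^ m * (1 / ((n : ℝ) + 1)) ^ 2 :=
        mul_le_mul (pow_le_pow_of_le_one (abs_nonneg r) hr.le (by omega))
          (pow_le_pow_of_le_one (by positivity) (div_le_one_of_le₀ hn (by positivity))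
            (by omega)) (by positivity) (by positivity)
    _ = |r| ^ m * (1 / ((n : ℝ) + 1) ^ 2) := by rw [div_pow, one_pow]

lemma hasSum_div_nat_add_one_pow_riemannZeta (r : ℝ) (m : ℕ) :
    HasSum (fun n : ℕ => (r / ((n : ℝ) + 1)) ^ (m + 2))
      ((riemannZeta ((m + 2 : ℕ) : ℂ)).re * r ^ (m + 2)) := by
  refine ((hasSum_one_div_nat_add_one_pow_riemannZeta_re (by omega)).mul_right
    (r ^ (m + 2))).congr_fun fun n => ?_
  rw [div_pow, one_div_mul_eq_div]

lemma hasSum_div_nat_add_one_pow_geometric {r : ℝ} (hr : |r| < 1) (n : ℕ) :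
    HasSum (fun m : ℕ => (r / ((n : ℝ) + 1)) ^ (m + 2))
      (r / ((n : ℝ) + 1 - r) - r / ((n : ℝ) + 1)) := by
  have hn : 1 ≤ (n : ℝ) + 1 := by simp
  have hpos : (0 : ℝ) < n + 1 := n.cast_add_one_pos
  have hx : ‖r / ((n : ℝ) + 1)‖ < 1 := by
    rw [Real.norm_eq_abs, abs_div, abs_of_pos hpos, div_lt_one hpos]
    linarith
  have hsum : (1 - r / ((n : ℝ) + 1))⁻¹ - 1 - r / ((n : ℝ) + 1) =
      r / ((n : ℝ) + 1 - r) - r / ((n : ℝ) + 1) := by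
    have : (n : ℝ) + 1 - r ≠ 0 := by linarith [le_abs_self r]
    field_simp
    ring
  exact hsum ▸ hasSum_pow_add_two hx

lemma hasSum_riemannZeta_mul_pow {r : ℝ} (hr : |r| < 1) :
    HasSum (fun m : ℕ => (riemannZeta ((m + 2 : ℕ) : ℂ)).re * r ^ (m + 2))
      (∑' p : ℕ × ℕ, (r / ((p.2 : ℝ) + 1)) ^ (p.1 + 2)) :=
  (summable_div_nat_add_one_pow hr).hasSum.prod_fiberwise
    (hasSum_div_nat_add_one_pow_riemannZeta r)

lemma hasSum_sub_div_nat_add_one {r : ℝ} (hr : |r| < 1) :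
    HasSum (fun n : ℕ => r / ((n : ℝ) + 1 - r) - r / ((n : ℝ) + 1))
      (∑' p : ℕ × ℕ, (r / ((p.2 : ℝ) + 1)) ^ (p.1 + 2)) :=
  ((Equiv.prodComm ℕ ℕ).hasSum_iff.mpr (summable_div_nat_add_one_pow hr).hasSum).prod_fiberwise
    (hasSum_div_nat_add_one_pow_geometric hr)

lemma summable_one_div_mul_nat_add_two_sub {r : ℝ} (hr : r < 1) :
    Summable (fun n : ℕ => 1 / (((n : ℝ) + 1) * ((n : ℝ) + 1 + 1 - r))) := by
  refine Summable.of_nonneg_of_le (fun n => ?_) (fun n => ?_)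
    (hasSum_one_div_nat_add_one_pow_riemannZeta_re one_lt_two).summable
  · have : (0 : ℝ) < n + 1 + 1 - r := by linarith [n.cast_add_one_pos (α := ℝ)]
    positivity
  · rw [sq]
    gcongr
    linarith

lemma tsum_sub_div_nat_add_one {r : ℝ} (hr : r < 1)
    (ht : Summable fun n : ℕ => r / ((n : ℝ) + 1 - r) - r / ((n : ℝ) + 1)) :
    ∑' n : ℕ, (r / ((n : ℝ) + 1 - r) - r / ((n : ℝ) + 1)) =
      r * (1 / (1 - r) + (r - 1) * ∑' n : ℕ, 1 / (((n : ℝ) + 1) * ((n : ℝ) + 1 + 1 - r))) := by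
  set u : ℕ → ℝ := fun n => r / ((n : ℝ) + 1 - r)
  have hs := summable_one_div_mul_nat_add_two_sub hr
  have hu : Tendsto u atTop (𝓝 0) := tendsto_const_nhds.div_atTop <|
    tendsto_atTop_add_const_right _ _ <| tendsto_atTop_add_const_right _ _ <|
      tendsto_natCast_atTop_atTop
  have hsplit (n : ℕ) : r / ((n : ℝ) + 1 - r) - r / ((n : ℝ) + 1) =
      (u n - u (n + 1)) + r * (r - 1) * (1 / (((n : ℝ) + 1) * ((n : ℝ) + 1 + 1 - r))) := by
    have h1 : (n : ℝ) + 1 - r ≠ 0 := by linarith [n.cast_add_one_pos (α := ℝ)]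
    have h2 : (n : ℝ) + 1 + 1 - r ≠ 0 := by linarith [n.cast_add_one_pos (α := ℝ)]
    simp only [u]
    push_cast
    field_simp
    ring
  have htel : HasSum (fun n => u n - u (n + 1)) (u 0 - 0) := by
    refine hasSum_sub_succ_of_tendsto hu ((ht.sub (hs.mul_left (r * (r - 1)))).congr fun n => ?_)
    rw [hsplit]
    ring
  rw [tsum_congr hsplit, (htel.add (hs.hasSum.mul_left (r * (r - 1)))).tsum_eq]
  simp only [u, Nat.cast_zero, zero_add, sub_zero]
  ring

lemma W_add_Wbar_eq_tsum {r : ℝ}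
    (h : Summable fun m : ℕ => (riemannZeta ((m + 2 : ℕ) : ℂ)).re * r ^ (m + 2)) :
    W r + Wbar r = ∑' m : ℕ, (riemannZeta ((m + 2 : ℕ) : ℂ)).re * r ^ (m + 2) := by
  refine Eq.trans ?_ (tsum_even_add_odd (h.comp_injective (mul_right_injective₀ two_ne_zero))
    (h.comp_injective ((add_left_injective 1).comp (mul_right_injective₀ two_ne_zero))))
  unfold W Wbar
  congr 1 <;> refine tsum_congr fun k => ?_ <;> push_cast <;> ring_nf

theorem stmt12 (r : ℝ) (hr : |r| < 1) :
    W r + Wbar r =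
      r * (1 / (1 - r) + (r - 1) * ∑' n : ℕ, 1 / (((n : ℝ) + 1) * (((n : ℝ) + 1) + 1 - r))) := by
  have hZ := hasSum_riemannZeta_mul_pow hr
  have ht := hasSum_sub_div_nat_add_one hr
  rw [W_add_Wbar_eq_tsum hZ.summable, hZ.tsum_eq, ← ht.tsum_eq,
    tsum_sub_div_nat_add_one (lt_of_abs_lt hr) ht.summable]
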